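/- R^{S_4} is a free module of rank two over the subalgebra P ∩ R^{S_4} (the S_4-invariant elements of P) with basis {1, z_1z_2z_3}; that is, R^{S_4} = (P ∩ R^{S_4}) ⊕ (P ∩ R^{S_4})·z_1z_2z_3. In particular, z_1z_2z_3 is S_4-invariant. -/

import Mathlib

noncomputable section

open MvPolynomial

/-- The set of two-element subsets of `{1,2,3,4}` (modelled as non-diagonal unordered
pairs of elements of `Fin 4`), indexing the variables of the polynomial ring `R`. -/
abbrev PairIdx : Type := {p : Sym2 (Fin 4) // ¬ p.IsDiag}

/-- The two-element subset `{i, j}`. -/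
def pr (i j : Fin 4) (h : i ≠ j) : PairIdx := ⟨s(i, j), by simp [Sym2.mk_isDiag_iff, h]⟩

/-- The permutation of two-element subsets induced by a permutation `σ` of `{1,2,3,4}`. -/
def pairPerm (σ : Equiv.Perm (Fin 4)) : Equiv.Perm PairIdx :=
  Equiv.subtypeEquiv
    { toFun := Sym2.map σ
      invFun := Sym2.map σ.symm
      left_inv := fun p => by
        rw [show Sym2.map σ.symm (Sym2.map σ p) = Sym2.map (σ.symm ∘ σ) p by
          rw [Sym2.map_comp]; rfl]
        simp
      right_inv := fun p => by
        rw [show Sym2.map σ (Sym2.map σ.symm p) = Sym2.map (σ ∘ σ.symm) p by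
          rw [Sym2.map_comp]; rfl]
        simp }
    (fun p => not_congr (Sym2.isDiag_map σ.injective).symm)

variable (K : Type*) [Field K]

/-- `R := K[x_{{i,j}}]`, the six-variable polynomial ring on the variables indexed by
the two-element subsets of `{1,2,3,4}`. -/
abbrev R4 : Type _ := MvPolynomial PairIdx K

/-- The action of `σ ∈ S₄` on `R`, `σ · x_{{i,j}} = x_{{σ(i),σ(j)}}`, as a `K`-algebra
homomorphism. -/
def actS4 (σ : Equiv.Perm (Fin 4)) : R4 K →ₐ[K] R4 K := rename (pairPerm σ)

/-- The invariant subalgebra `R^{S₄}`. -/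
def S4Inv : Subalgebra K (R4 K) :=
  ⨅ σ : Equiv.Perm (Fin 4), AlgHom.equalizer (actS4 K σ) (AlgHom.id K (R4 K))

/-- `x₁ = x_{{1,2}} + x_{{3,4}}`, `x₂ = x_{{1,3}} + x_{{2,4}}`, `x₃ = x_{{1,4}} + x_{{2,3}}`
(vertices renamed `1,2,3,4 → 0,1,2,3`). -/
def xg : Fin 3 → R4 K :=
  ![X (pr 0 1 (by decide)) + X (pr 2 3 (by decide)),
    X (pr 0 2 (by decide)) + X (pr 1 3 (by decide)),
    X (pr 0 3 (by decide)) + X (pr 1 2 (by decide))]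

/-- `z₁ = x_{{1,2}} − x_{{3,4}}`, `z₂ = x_{{1,3}} − x_{{2,4}}`, `z₃ = x_{{1,4}} − x_{{2,3}}`. -/
def zg : Fin 3 → R4 K :=
  ![X (pr 0 1 (by decide)) - X (pr 2 3 (by decide)),
    X (pr 0 2 (by decide)) - X (pr 1 3 (by decide)),
    X (pr 0 3 (by decide)) - X (pr 1 2 (by decide))]

/-- `[x^a z^{2b}] := Σ_{i=1}^{3} x_i^a z_i^{2b}`. -/
def pSum (a b : ℕ) : R4 K := ∑ i : Fin 3, xg K i ^ a * zg K i ^ (2 * b)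

/-- The Klein four subgroup `H = {id, (12)(34), (13)(24), (14)(23)}` of `S₄`
(vertices renamed `1,2,3,4 → 0,1,2,3`). -/
def klein : Set (Equiv.Perm (Fin 4)) :=
  {1, Equiv.swap 0 1 * Equiv.swap 2 3, Equiv.swap 0 2 * Equiv.swap 1 3,
    Equiv.swap 0 3 * Equiv.swap 1 2}

/-- The subalgebra `R^H` of `H`-invariants. -/
def HInv : Subalgebra K (R4 K) :=
  ⨅ σ ∈ klein, AlgHom.equalizer (actS4 K σ) (AlgHom.id K (R4 K))

/-- The subalgebra `P = K[x₁, x₂, x₃, z₁², z₂², z₃²]` of `R`. -/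
def Psub : Subalgebra K (R4 K) :=
  Algebra.adjoin K {xg K 0, xg K 1, xg K 2, zg K 0 ^ 2, zg K 1 ^ 2, zg K 2 ^ 2}

/-!
When `2 ≠ 0` in `K`, the substitution `x_{{1,2}} = (x₁ + z₁)/2`, `x_{{3,4}} = (x₁ - z₁)/2`, …
identifies `R` with the polynomial ring in `x₁, x₂, x₃, z₁, z₂, z₃`, and maps the polynomials
that are even in every `zᵢ` into `P`. The variable swap `x_{{1,2}} ↔ x_{{3,4}}` negates `z₁` and
fixes the other five generators, and similarly for `z₂`, `z₃`; the product of two of these swaps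
is induced by an element of the Klein four group `H`. So in every monomial of an `H`-invariant
`f` the exponents of `z₁, z₂, z₃` have the same parity, whence `f = p + q·z₁z₂z₃` with
`p, q ∈ P`; this decomposition is unique because the swap negating `z₁` fixes `P` and negates
`z₁z₂z₃`. Each `σ ∈ S₄` permutes the `xᵢ`, and the `zᵢ` up to an even number of sign changes,
so it preserves `P` and fixes `z₁z₂z₃`; by uniqueness, `p` and `q` are `S₄`-invariant when `f` is.
-/

namespace MvPolynomial

section SignFlip

variable {σ R : Type*} [CommRing R] [DecidableEq σ]

def signFlip (s : σ) : MvPolynomial σ R →ₐ[R] MvPolynomial σ R :=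
  aeval fun t => if t = s then -X t else X t

theorem signFlip_X (s t : σ) :
    signFlip s (X t : MvPolynomial σ R) = if t = s then -X t else X t :=
  aeval_X _ _

theorem signFlip_monomial (s : σ) (m : σ →₀ ℕ) (c : R) :
    signFlip s (monomial m c) = monomial m ((-1) ^ m s * c) := by
  have hpow : ∀ t k, (if t = s then -X t else X t) ^ k =
      (if t = s then C ((-1) ^ k) else 1) * (X t : MvPolynomial σ R) ^ k := by
    intro t k
    split_ifs
    · rw [neg_pow, map_pow, map_neg, C_1]
    · rw [one_mul]
  have hsign : (if s ∈ m.support then C ((-1) ^ m s) else 1) =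
      (C ((-1) ^ m s) : MvPolynomial σ R) := by
    split_ifs with hs
    · rfl
    · rw [Finsupp.notMem_support_iff.1 hs, pow_zero, C_1]
  rw [signFlip, aeval_monomial, monomial_eq, algebraMap_eq]
  simp_rw [hpow, Finsupp.prod_mul, Finsupp.prod_ite_eq', hsign, C_mul]
  ring

theorem coeff_signFlip (s : σ) (u : MvPolynomial σ R) (m : σ →₀ ℕ) :
    coeff m (signFlip s u) = (-1) ^ m s * coeff m u := by
  induction u using MvPolynomial.induction_on' with
  | monomial n c =>
    rw [signFlip_monomial, coeff_monomial, coeff_monomial]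
    split_ifs with h
    · rw [h]
    · rw [mul_zero]
  | add p q hp hq => rw [map_add, coeff_add, coeff_add, hp, hq, mul_add]

theorem even_iff_even_of_signFlip_eq [NoZeroDivisors R] (h : (-1 : R) ≠ 1) {s t : σ}
    {u : MvPolynomial σ R} (hst : signFlip s u = signFlip t u) {m : σ →₀ ℕ}
    (hm : m ∈ u.support) : Even (m s) ↔ Even (m t) := by
  have hc := congrArg (coeff m) hst
  rw [coeff_signFlip, coeff_signFlip] at hc
  rw [← neg_one_pow_eq_one_iff_even h, ← neg_one_pow_eq_one_iff_even h,
    mul_right_cancel₀ (mem_support_iff.1 hm) hc]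

end SignFlip

section EvenSubalgebra

variable {ι κ R : Type*} [CommSemiring R]

variable (ι κ R) in
def evenSubalgebra : Subalgebra R (MvPolynomial (ι ⊕ κ) R) :=
  Algebra.adjoin R (Set.range (X ∘ Sum.inl) ∪ Set.range fun k => X (Sum.inr k) ^ 2)

theorem X_inl_mem_evenSubalgebra (i : ι) : X (Sum.inl i) ∈ evenSubalgebra ι κ R :=
  Algebra.subset_adjoin (Set.mem_union_left _ ⟨i, rfl⟩)

theorem X_inr_sq_mem_evenSubalgebra (k : κ) : X (Sum.inr k) ^ 2 ∈ evenSubalgebra ι κ R :=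
  Algebra.subset_adjoin (Set.mem_union_right _ ⟨k, rfl⟩)

theorem monomial_mem_evenSubalgebra {m : ι ⊕ κ →₀ ℕ} (c : R)
    (hm : ∀ k, Even (m (Sum.inr k))) : monomial m c ∈ evenSubalgebra ι κ R := by
  rw [monomial_eq]
  refine mul_mem (Subalgebra.algebraMap_mem _ c) (prod_mem fun t _ => ?_)
  rcases t with i | k
  · exact pow_mem (X_inl_mem_evenSubalgebra i) _
  · obtain ⟨n, hn⟩ := (hm k).two_dvd
    dsimp only
    rw [hn, pow_mul]
    exact pow_mem (X_inr_sq_mem_evenSubalgebra k) _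

theorem exists_eq_add_mul_prod_X_inr [Fintype κ] {u : MvPolynomial (ι ⊕ κ) R}
    (hu : ∀ m ∈ u.support, ∀ k l, Even (m (Sum.inr k)) ↔ Even (m (Sum.inr l))) :
    ∃ p ∈ evenSubalgebra ι κ R, ∃ q ∈ evenSubalgebra ι κ R,
      u = p + q * ∏ k, X (Sum.inr k) := by
  classical
  let δ : ι ⊕ κ →₀ ℕ := ∑ k, Finsupp.single (Sum.inr k) 1
  have hδ : ∏ k, X (Sum.inr k) = (monomial δ 1 : MvPolynomial (ι ⊕ κ) R) := by
    rw [monomial_sum_one]; rfl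
  have hδinl : ∀ i, δ (Sum.inl i) = 0 := by simp [δ]
  have hδinr : ∀ k, δ (Sum.inr k) = 1 := by simp [δ, Finsupp.single_apply]
  let AllEven (m : ι ⊕ κ →₀ ℕ) : Prop := ∀ k, Even (m (Sum.inr k))
  have hodd : ∀ m ∈ {m ∈ u.support | ¬ AllEven m}, ∀ k, Odd (m (Sum.inr k)) := by
    intro m hm k
    obtain ⟨hm, hne⟩ := Finset.mem_filter.1 hm
    obtain ⟨l, hl⟩ := not_forall.1 hne
    exact Nat.not_even_iff_odd.1 fun hk => hl ((hu m hm k l).1 hk)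
  refine ⟨∑ m ∈ u.support with AllEven m, monomial m (coeff m u),
    sum_mem fun m hm => monomial_mem_evenSubalgebra _ (Finset.mem_filter.1 hm).2,
    ∑ m ∈ u.support with ¬ AllEven m, monomial (m - δ) (coeff m u),
    sum_mem fun m hm => monomial_mem_evenSubalgebra _ fun k => ?_, ?_⟩
  · rw [Finsupp.tsub_apply, hδinr]
    exact Nat.Odd.sub_odd (hodd m hm k) odd_one
  · have hle : ∀ m ∈ {m ∈ u.support | ¬ AllEven m}, δ ≤ m := fun m hm t => by
      rcases t with i | k
      · simp [hδinl]
      · exact hδinr k ▸ (hodd m hm k).pos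
    rw [hδ, Finset.sum_mul]
    simp_rw [monomial_mul, mul_one]
    conv_lhs => rw [u.as_sum, ← Finset.sum_filter_add_sum_filter_not u.support AllEven]
    congr 1
    exact Finset.sum_congr rfl fun m hm => by rw [tsub_add_cancel_of_le (hle m hm)]

end EvenSubalgebra

theorem C_inv_two_mul_two {σ F : Type*} [Field F] (h2 : (2 : F) ≠ 0) :
    (C 2⁻¹ : MvPolynomial σ F) * 2 = 1 := by
  rw [← map_ofNat C 2, ← C_mul, inv_mul_cancel₀ h2, C_1]

end MvPolynomial

def pairA : Fin 3 → PairIdx := ![pr 0 1 (by decide), pr 0 2 (by decide), pr 0 3 (by decide)]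

def pairB : Fin 3 → PairIdx := ![pr 2 3 (by decide), pr 1 3 (by decide), pr 1 2 (by decide)]

theorem xg_eq (i : Fin 3) : xg K i = X (pairA i) + X (pairB i) := by fin_cases i <;> rfl

theorem zg_eq (i : Fin 3) : zg K i = X (pairA i) - X (pairB i) := by fin_cases i <;> rfl

theorem Psub_eq_adjoin :
    Psub K = Algebra.adjoin K (Set.range (xg K) ∪ Set.range fun i => zg K i ^ 2) := by
  rw [Psub]
  congr 1
  ext u
  simp only [Set.mem_union, Set.mem_range, Fin.exists_fin_succ, Fin.succ_zero_eq_one,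
    Fin.succ_one_eq_two, IsEmpty.exists_iff, or_false, Set.mem_insert_iff,
    Set.mem_singleton_iff, eq_comm (a := u), or_assoc]

theorem mem_S4Inv {f : R4 K} : f ∈ S4Inv K ↔ ∀ σ, actS4 K σ f = f := by
  simp [S4Inv, Algebra.mem_iInf, AlgHom.mem_equalizer]

theorem mem_HInv {f : R4 K} : f ∈ HInv K ↔ ∀ σ ∈ klein, actS4 K σ f = f := by
  simp [HInv, Algebra.mem_iInf, AlgHom.mem_equalizer]

theorem S4Inv_le_HInv : S4Inv K ≤ HInv K :=
  fun _ hf => (mem_HInv K).2 fun σ _ => (mem_S4Inv K).1 hf σ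

def flipZ (i : Fin 3) : R4 K →ₐ[K] R4 K := rename (Equiv.swap (pairA i) (pairB i))

theorem swap_pairA : ∀ i j : Fin 3,
    Equiv.swap (pairA i) (pairB i) (pairA j) = if j = i then pairB j else pairA j := by
  decide

theorem swap_pairB : ∀ i j : Fin 3,
    Equiv.swap (pairA i) (pairB i) (pairB j) = if j = i then pairA j else pairB j := by
  decide

theorem flipZ_xg (i j : Fin 3) : flipZ K i (xg K j) = xg K j := by
  rw [xg_eq, map_add, flipZ, rename_X, rename_X, swap_pairA, swap_pairB]
  split_ifs
  · exact add_comm _ _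
  · rfl

theorem flipZ_zg (i j : Fin 3) : flipZ K i (zg K j) = if j = i then -zg K j else zg K j := by
  rw [zg_eq, map_sub, flipZ, rename_X, rename_X, swap_pairA, swap_pairB]
  split_ifs
  · exact (neg_sub _ _).symm
  · rfl

theorem flipZ_flipZ (i : Fin 3) (f : R4 K) : flipZ K i (flipZ K i f) = f := by
  rw [flipZ, rename_rename, ← Equiv.Perm.coe_mul, Equiv.swap_mul_self, Equiv.Perm.coe_one,
    rename_id, AlgHom.id_apply]

theorem exists_mem_klein_pairPerm_eq : ∀ i j : Fin 3, i ≠ j → ∃ σ ∈ klein,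
    pairPerm σ = Equiv.swap (pairA i) (pairB i) * Equiv.swap (pairA j) (pairB j) := by
  simp only [klein, Set.mem_insert_iff, Set.mem_singleton_iff]
  decide

theorem flipZ_eq_flipZ_of_mem_HInv {f : R4 K} (hf : f ∈ HInv K) (i j : Fin 3) :
    flipZ K i f = flipZ K j f := by
  obtain rfl | hij := eq_or_ne i j
  · rfl
  obtain ⟨σ, hσ, hσij⟩ := exists_mem_klein_pairPerm_eq i j hij
  have hfix : flipZ K i (flipZ K j f) = f := by
    have := (mem_HInv K).1 hf σ hσ
    rwa [actS4, hσij, Equiv.Perm.coe_mul, ← rename_rename] at this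
  conv_lhs => rw [← hfix, flipZ_flipZ]

def pairEquiv : Fin 3 ⊕ Fin 3 ≃ PairIdx := Equiv.ofBijective (Sum.elim pairA pairB) (by decide)

def xzHom : MvPolynomial (Fin 3 ⊕ Fin 3) K →ₐ[K] R4 K := aeval (Sum.elim (xg K) (zg K))

def xzInv : R4 K →ₐ[K] MvPolynomial (Fin 3 ⊕ Fin 3) K :=
  aeval fun p => (pairEquiv.symm p).elim (fun i => C 2⁻¹ * (X (Sum.inl i) + X (Sum.inr i)))
    (fun i => C 2⁻¹ * (X (Sum.inl i) - X (Sum.inr i)))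

theorem xzInv_X_pairA (i : Fin 3) :
    xzInv K (X (pairA i)) = C 2⁻¹ * (X (Sum.inl i) + X (Sum.inr i)) := by
  rw [xzInv, aeval_X, show pairA i = pairEquiv (Sum.inl i) from rfl, Equiv.symm_apply_apply]
  rfl

theorem xzInv_X_pairB (i : Fin 3) :
    xzInv K (X (pairB i)) = C 2⁻¹ * (X (Sum.inl i) - X (Sum.inr i)) := by
  rw [xzInv, aeval_X, show pairB i = pairEquiv (Sum.inr i) from rfl, Equiv.symm_apply_apply]
  rfl

theorem xzHom_comp_xzInv (h2 : (2 : K) ≠ 0) : (xzHom K).comp (xzInv K) = AlgHom.id K _ := by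
  refine algHom_ext fun p => ?_
  obtain ⟨i | i, rfl⟩ := pairEquiv.surjective p
  · rw [AlgHom.comp_apply, show pairEquiv (Sum.inl i) = pairA i from rfl, xzInv_X_pairA]
    simp only [xzHom, map_mul, map_add, aeval_C, aeval_X, algebraMap_eq, Sum.elim_inl,
      Sum.elim_inr, xg_eq, zg_eq, AlgHom.id_apply]
    linear_combination (X (pairA i) : R4 K) * C_inv_two_mul_two h2
  · rw [AlgHom.comp_apply, show pairEquiv (Sum.inr i) = pairB i from rfl, xzInv_X_pairB]
    simp only [xzHom, map_mul, map_sub, aeval_C, aeval_X, algebraMap_eq, Sum.elim_inl,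
      Sum.elim_inr, xg_eq, zg_eq, AlgHom.id_apply]
    linear_combination (X (pairB i) : R4 K) * C_inv_two_mul_two h2

theorem xzInv_comp_xzHom (h2 : (2 : K) ≠ 0) : (xzInv K).comp (xzHom K) = AlgHom.id K _ := by
  refine algHom_ext fun t => ?_
  rcases t with i | i
  · simp only [AlgHom.comp_apply, xzHom, aeval_X, Sum.elim_inl, xg_eq, map_add, xzInv_X_pairA,
      xzInv_X_pairB, AlgHom.id_apply]
    linear_combination (X (Sum.inl i) : MvPolynomial (Fin 3 ⊕ Fin 3) K) * C_inv_two_mul_two h2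
  · simp only [AlgHom.comp_apply, xzHom, aeval_X, Sum.elim_inr, zg_eq, map_sub, xzInv_X_pairA,
      xzInv_X_pairB, AlgHom.id_apply]
    linear_combination (X (Sum.inr i) : MvPolynomial (Fin 3 ⊕ Fin 3) K) * C_inv_two_mul_two h2

def xzEquiv (h2 : (2 : K) ≠ 0) : MvPolynomial (Fin 3 ⊕ Fin 3) K ≃ₐ[K] R4 K :=
  AlgEquiv.ofAlgHom (xzHom K) (xzInv K) (xzHom_comp_xzInv K h2) (xzInv_comp_xzHom K h2)

theorem xzEquiv_X_inl (h2 : (2 : K) ≠ 0) (i : Fin 3) : xzEquiv K h2 (X (Sum.inl i)) = xg K i :=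
  aeval_X _ _

theorem xzEquiv_X_inr (h2 : (2 : K) ≠ 0) (i : Fin 3) : xzEquiv K h2 (X (Sum.inr i)) = zg K i :=
  aeval_X _ _

theorem flipZ_xzEquiv (h2 : (2 : K) ≠ 0) (i : Fin 3) (u : MvPolynomial (Fin 3 ⊕ Fin 3) K) :
    flipZ K i (xzEquiv K h2 u) = xzEquiv K h2 (signFlip (Sum.inr i) u) := by
  show ((flipZ K i).comp (xzEquiv K h2).toAlgHom) u =
    ((xzEquiv K h2).toAlgHom.comp (signFlip _)) u
  congr 1
  refine algHom_ext fun t => ?_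
  rcases t with j | j
  · show flipZ K i (xzEquiv K h2 (X (Sum.inl j))) = xzEquiv K h2 (signFlip _ (X (Sum.inl j)))
    rw [signFlip_X, if_neg Sum.inl_ne_inr, xzEquiv_X_inl, flipZ_xg]
  · show flipZ K i (xzEquiv K h2 (X (Sum.inr j))) = xzEquiv K h2 (signFlip _ (X (Sum.inr j)))
    rw [signFlip_X, xzEquiv_X_inr, flipZ_zg]
    by_cases hji : j = i
    · rw [if_pos hji, if_pos (congrArg Sum.inr hji), map_neg, xzEquiv_X_inr]
    · rw [if_neg hji, if_neg (Sum.inr_injective.ne hji), xzEquiv_X_inr]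

theorem xzEquiv_mem_Psub (h2 : (2 : K) ≠ 0) {u : MvPolynomial (Fin 3 ⊕ Fin 3) K}
    (hu : u ∈ evenSubalgebra (Fin 3) (Fin 3) K) : xzEquiv K h2 u ∈ Psub K := by
  suffices evenSubalgebra (Fin 3) (Fin 3) K ≤ (Psub K).comap (xzEquiv K h2).toAlgHom from this hu
  refine Algebra.adjoin_le ?_
  rw [Psub_eq_adjoin]
  rintro _ (⟨i, rfl⟩ | ⟨i, rfl⟩)
  · exact Algebra.subset_adjoin (Or.inl ⟨i, (xzEquiv_X_inl K h2 i).symm⟩)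
  · exact Algebra.subset_adjoin (Or.inr ⟨i, by simp [xzEquiv_X_inr]⟩)

theorem exists_eq_add_mul_zg_prod_of_mem_HInv (h2 : (2 : K) ≠ 0) {f : R4 K} (hf : f ∈ HInv K) :
    ∃ p ∈ Psub K, ∃ q ∈ Psub K, f = p + q * (zg K 0 * zg K 1 * zg K 2) := by
  set e := xzEquiv K h2
  have hflip : ∀ i j, signFlip (Sum.inr i) (e.symm f) = signFlip (Sum.inr j) (e.symm f) := by
    intro i j
    apply e.injective
    rw [← flipZ_xzEquiv, ← flipZ_xzEquiv, e.apply_symm_apply, flipZ_eq_flipZ_of_mem_HInv K hf]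
  have hneg : (-1 : K) ≠ 1 := fun h => h2 (by linear_combination -h)
  obtain ⟨p, hp, q, hq, hpq⟩ := exists_eq_add_mul_prod_X_inr fun m hm k l =>
    even_iff_even_of_signFlip_eq hneg (hflip k l) hm
  refine ⟨e p, xzEquiv_mem_Psub K h2 hp, e q, xzEquiv_mem_Psub K h2 hq, ?_⟩
  rw [← e.apply_symm_apply f, hpq, map_add, map_mul, map_prod, Fin.prod_univ_three]
  simp only [e, xzEquiv_X_inr]

theorem flipZ_eq_self_of_mem_Psub (i : Fin 3) {p : R4 K} (hp : p ∈ Psub K) : flipZ K i p = p := by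
  suffices Psub K ≤ AlgHom.equalizer (flipZ K i) (AlgHom.id K _) from this hp
  rw [Psub_eq_adjoin]
  refine Algebra.adjoin_le ?_
  rintro _ (⟨j, rfl⟩ | ⟨j, rfl⟩)
  · exact flipZ_xg K i j
  · show flipZ K i (zg K j ^ 2) = zg K j ^ 2
    rw [map_pow, flipZ_zg]
    split_ifs
    · exact neg_sq _
    · rfl

theorem flipZ_zg_prod (i : Fin 3) :
    flipZ K i (zg K 0 * zg K 1 * zg K 2) = -(zg K 0 * zg K 1 * zg K 2) := by
  fin_cases i <;> simp [flipZ_zg]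

theorem zg_prod_ne_zero : zg K 0 * zg K 1 * zg K 2 ≠ 0 := by
  have hAB : ∀ i, pairA i ≠ pairB i := by decide
  have hz : ∀ i, zg K i ≠ 0 := fun i => by
    rw [zg_eq, sub_ne_zero]
    exact X_injective.ne (hAB i)
  exact mul_ne_zero (mul_ne_zero (hz 0) (hz 1)) (hz 2)

theorem eq_zero_of_add_mul_zg_prod_eq_zero (h2 : (2 : K) ≠ 0) {p q : R4 K} (hp : p ∈ Psub K)
    (hq : q ∈ Psub K) (h : p + q * (zg K 0 * zg K 1 * zg K 2) = 0) : p = 0 ∧ q = 0 := by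
  have h' : p - q * (zg K 0 * zg K 1 * zg K 2) = 0 := by
    have := congrArg (flipZ K 0) h
    rw [map_add, map_mul, flipZ_eq_self_of_mem_Psub K 0 hp, flipZ_eq_self_of_mem_Psub K 0 hq,
      flipZ_zg_prod, map_zero] at this
    linear_combination this
  have hp0 : p = 0 := by
    have h2p : (2 : K) • p = 0 := by rw [two_smul]; linear_combination h + h'
    exact (smul_eq_zero.1 h2p).resolve_left h2
  refine ⟨hp0, ?_⟩
  rw [hp0, zero_add] at h
  exact (mul_eq_zero.1 h).resolve_right (zg_prod_ne_zero K)

theorem pairPerm_pairA_pairB : ∀ σ : Equiv.Perm (Fin 4), ∃ π : Equiv.Perm (Fin 3),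
    ∃ s : Fin 3 → Bool, Even ((s 0).toNat + (s 1).toNat + (s 2).toNat) ∧ ∀ i,
      (pairPerm σ (pairA i), pairPerm σ (pairB i)) =
        if s i then (pairB (π i), pairA (π i)) else (pairA (π i), pairB (π i)) := by
  decide

theorem exists_actS4_xg_zg (σ : Equiv.Perm (Fin 4)) : ∃ π : Equiv.Perm (Fin 3),
    ∃ s : Fin 3 → Bool, Even ((s 0).toNat + (s 1).toNat + (s 2).toNat) ∧ ∀ i,
      actS4 K σ (xg K i) = xg K (π i) ∧ actS4 K σ (zg K i) = (-1) ^ (s i).toNat * zg K (π i) := by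
  obtain ⟨π, s, hs, hσ⟩ := pairPerm_pairA_pairB σ
  refine ⟨π, s, hs, fun i => ?_⟩
  rw [xg_eq, zg_eq, xg_eq, zg_eq, actS4, map_add, map_sub, rename_X, rename_X]
  have hi := hσ i
  cases hsi : s i <;>
    simp only [hsi, Bool.false_eq_true, if_false, if_true, Prod.mk.injEq] at hi <;>
    rw [hi.1, hi.2] <;> refine ⟨by ring, ?_⟩ <;>
    simp only [Bool.toNat_false, Bool.toNat_true] <;> ring

theorem actS4_mem_Psub (σ : Equiv.Perm (Fin 4)) {p : R4 K} (hp : p ∈ Psub K) :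
    actS4 K σ p ∈ Psub K := by
  obtain ⟨π, s, -, hσ⟩ := exists_actS4_xg_zg K σ
  suffices Psub K ≤ (Psub K).comap (actS4 K σ) from this hp
  rw [Psub_eq_adjoin]
  refine Algebra.adjoin_le ?_
  rintro _ (⟨i, rfl⟩ | ⟨i, rfl⟩)
  · exact Algebra.subset_adjoin (Or.inl ⟨π i, (hσ i).1.symm⟩)
  · refine Algebra.subset_adjoin (Or.inr ⟨π i, ?_⟩)
    show zg K (π i) ^ 2 = actS4 K σ (zg K i ^ 2)
    rw [map_pow, (hσ i).2, mul_pow, ← pow_mul, (even_two.mul_left _).neg_one_pow, one_mul]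

theorem zg_prod_mem_S4Inv : zg K 0 * zg K 1 * zg K 2 ∈ S4Inv K := by
  refine (mem_S4Inv K).2 fun σ => ?_
  obtain ⟨π, s, hs, hσ⟩ := exists_actS4_xg_zg K σ
  calc actS4 K σ (zg K 0 * zg K 1 * zg K 2)
      = (-1) ^ ((s 0).toNat + (s 1).toNat + (s 2).toNat) * ∏ i, zg K (π i) := by
        rw [map_mul, map_mul, (hσ 0).2, (hσ 1).2, (hσ 2).2, Fin.prod_univ_three, pow_add, pow_add]
        ring
    _ = zg K 0 * zg K 1 * zg K 2 := by
        rw [hs.neg_one_pow, one_mul, Equiv.prod_comp π (zg K), Fin.prod_univ_three]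

theorem mem_S4Inv_of_add_mul_zg_prod_mem_S4Inv (h2 : (2 : K) ≠ 0) {p q : R4 K}
    (hp : p ∈ Psub K) (hq : q ∈ Psub K) (hf : p + q * (zg K 0 * zg K 1 * zg K 2) ∈ S4Inv K) :
    p ∈ S4Inv K ∧ q ∈ S4Inv K := by
  have hσ : ∀ σ, actS4 K σ p = p ∧ actS4 K σ q = q := fun σ => by
    have hfσ := (mem_S4Inv K).1 hf σ
    rw [map_add, map_mul, (mem_S4Inv K).1 (zg_prod_mem_S4Inv K) σ] at hfσ
    have := eq_zero_of_add_mul_zg_prod_eq_zero K h2 (sub_mem (actS4_mem_Psub K σ hp) hp)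
      (sub_mem (actS4_mem_Psub K σ hq) hq) (by linear_combination hfσ)
    exact ⟨sub_eq_zero.1 this.1, sub_eq_zero.1 this.2⟩
  exact ⟨(mem_S4Inv K).2 fun σ => (hσ σ).1, (mem_S4Inv K).2 fun σ => (hσ σ).2⟩

/-- Let `K` be a field of characteristic `0` or `> 3`.  Then `R^{S₄}`
is a free module of rank two over the subalgebra `P ∩ R^{S₄}` with basis
`{1, z₁z₂z₃}`, i.e. `R^{S₄} = (P ∩ R^{S₄}) ⊕ (P ∩ R^{S₄})·z₁z₂z₃`: every element of
`R^{S₄}` is `p + q·z₁z₂z₃` with `p, q ∈ P ∩ R^{S₄}`, and such a representation is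
unique.  In particular, `z₁z₂z₃` is `S₄`-invariant. -/
theorem S4Inv_free_rank_two_over_PS4
    (hchar : ringChar K = 0 ∨ 3 < ringChar K) :
    zg K 0 * zg K 1 * zg K 2 ∈ S4Inv K
    ∧ (∀ f ∈ S4Inv K,
        ∃ p ∈ Psub K ⊓ S4Inv K, ∃ q ∈ Psub K ⊓ S4Inv K,
          f = p + q * (zg K 0 * zg K 1 * zg K 2))
    ∧ (∀ p ∈ Psub K ⊓ S4Inv K, ∀ q ∈ Psub K ⊓ S4Inv K,
        p + q * (zg K 0 * zg K 1 * zg K 2) = 0 → p = 0 ∧ q = 0) := by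
  have h2 : (2 : K) ≠ 0 := Ring.two_ne_zero (by omega)
  refine ⟨zg_prod_mem_S4Inv K, fun f hf => ?_, fun p hp q hq h =>
    eq_zero_of_add_mul_zg_prod_eq_zero K h2 hp.1 hq.1 h⟩
  obtain ⟨p, hp, q, hq, rfl⟩ := exists_eq_add_mul_zg_prod_of_mem_HInv K h2 (S4Inv_le_HInv K hf)
  obtain ⟨hpS, hqS⟩ := mem_S4Inv_of_add_mul_zg_prod_mem_S4Inv K h2 hp hq hf
  exact ⟨p, ⟨hp, hpS⟩, q, ⟨hq, hqS⟩, rfl⟩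

end
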